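/- arXiv:2307.16658 — 5 statements merged into one kernel-verified Lean document; each statement's English description precedes it below -/
import Mathlib

section
/- Let ω ∈ (0,1) be a quadratic irrational and let F be the Gauss map F(x) = 1/x − ⌊1/x⌋. Then ω is purely periodic under F (i.e. F^[p](ω) = ω for some integer p ≥ 1) if and only if its Galois conjugate ω' satisfies ω' < −1. -/
/-- The Gauss map `x ↦ 1/x - ⌊1/x⌋` on irrationals in `(0,1)`, extended by `0` elsewhere. -/
noncomputable def gaussMap (x : ℝ) : ℝ :=
  open Classical in
  if Irrational x ∧ x ∈ Set.Ioo (0 : ℝ) 1 then 1 / x - ⌊1 / x⌋ else 0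

/-!
Carry along the orbit of `ω` under the Gauss map `F` an integer quadratic `a X² + b X + c`
vanishing at the current point `x`, whose other root is the conjugate `x'`. Writing
`x = 1 / (n + y)` with `n = ⌊1/x⌋` turns it into the quadratic
`c y² + (b + 2cn) y + (a + bn + cn²)` of `y = F x`, with the same discriminant, and the
conjugate moves by the same Möbius map `x' ↦ 1/x' - n`.

If `x' < -1`, then `1/x' ∈ (-1, 0)`, so all later conjugates are again `< -1`, and
`n = -⌈(F x)'⌉` can be read off from the image: `F` is injective on such points. Moreover
`a c < 0`, so `|a|, |b|, |c|` are bounded by the discriminant, the orbit runs through finitely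
many quadratics and hence through finitely many points, and injectivity makes it periodic.

Conversely, along a periodic orbit the conjugates are periodic too. Once one of them is negative,
all later ones are `< -1`, and by periodicity so is `ω'`. If all were positive they would lie in
`(0, 1)`, and `|x' - x|` would be multiplied by `1 / (x x') > 1` at every step, which periodicity
forbids.
-/

open Set Function

lemma Irrational.eq_zero_of_intCast_mul_add_intCast_eq_zero {x : ℝ} (hx : Irrational x)
    {m k : ℤ} (h : (m : ℝ) * x + k = 0) : m = 0 := by
  by_contra hm
  exact (hx.intCast_mul hm).ne_int (-k) (by push_cast; linarith)

lemma Irrational.fract_mem_Ioo {x : ℝ} (hx : Irrational x) : Int.fract x ∈ Ioo 0 1 :=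
  ⟨Int.fract_pos.2 (hx.ne_int _), Int.fract_lt_one x⟩

lemma one_le_floor_one_div {x : ℝ} (hx : x ∈ Ioo 0 1) : 1 ≤ ⌊1 / x⌋ := by
  rw [Int.le_floor, Int.cast_one, le_div_iff₀ hx.1, one_mul]
  exact hx.2.le

lemma quadratic_one_div_sub {a b c x : ℝ} (n : ℝ) (hx : x ≠ 0)
    (h : a * x ^ 2 + b * x + c = 0) :
    c * (1 / x - n) ^ 2 + (b + 2 * c * n) * (1 / x - n) + (a + b * n + c * n ^ 2) = 0 := by
  field_simp
  linear_combination h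

structure GaussPoint where
  x : ℝ
  a : ℤ
  b : ℤ
  c : ℤ
  mem_Ioo : x ∈ Ioo 0 1
  irrational : Irrational x
  a_ne_zero : a ≠ 0
  root : (a : ℝ) * x ^ 2 + b * x + c = 0

namespace GaussPoint

variable (s : GaussPoint)

noncomputable def conj : ℝ := -s.b / s.a - s.x

def coeffs : ℤ × ℤ × ℤ := (s.a, s.b, s.c)

def disc : ℤ := s.b ^ 2 - 4 * s.a * s.c

def IsReduced : Prop := s.conj < -1

lemma a_cast_ne_zero : (s.a : ℝ) ≠ 0 := Int.cast_ne_zero.2 s.a_ne_zero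

lemma x_mul_conj : s.x * s.conj = s.c / s.a := by
  have := s.a_cast_ne_zero
  rw [conj]
  field_simp
  linear_combination -s.root

lemma conj_irrational : Irrational s.conj := by
  have h : s.conj = ((-s.b / s.a : ℚ) : ℝ) - s.x := by push_cast; rfl
  exact h ▸ s.irrational.ratCast_sub (q := _)

lemma conj_ne_zero : s.conj ≠ 0 := s.conj_irrational.ne_zero

lemma c_ne_zero : s.c ≠ 0 := by
  have h : (s.c : ℝ) / s.a ≠ 0 := s.x_mul_conj ▸ mul_ne_zero s.mem_Ioo.1.ne' s.conj_ne_zero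
  exact_mod_cast (div_ne_zero_iff.1 h).1

lemma conj_ne_x : s.conj ≠ s.x := by
  intro h
  have := s.a_cast_ne_zero
  refine mul_ne_zero two_ne_zero s.a_ne_zero
    (s.irrational.eq_zero_of_intCast_mul_add_intCast_eq_zero (k := s.b) ?_)
  rw [conj] at h
  field_simp at h
  push_cast
  linarith

lemma conj_eq_of_x_eq {s t : GaussPoint} (h : s.x = t.x) : s.conj = t.conj := by
  have ht := t.root
  rw [← h] at ht
  have hab : t.a * s.b - s.a * t.b = 0 := by
    refine s.irrational.eq_zero_of_intCast_mul_add_intCast_eq_zero (k := t.a * s.c - s.a * t.c) ?_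
    push_cast
    linear_combination (t.a : ℝ) * s.root - (s.a : ℝ) * ht
  have := s.a_cast_ne_zero
  have := t.a_cast_ne_zero
  rw [conj, conj, h]
  field_simp
  have hab' : (t.a : ℝ) * s.b - s.a * t.b = 0 := by exact_mod_cast hab
  linear_combination -hab'

noncomputable def step : GaussPoint where
  x := 1 / s.x - ⌊1 / s.x⌋
  a := s.c
  b := s.b + 2 * s.c * ⌊1 / s.x⌋
  c := s.a + s.b * ⌊1 / s.x⌋ + s.c * ⌊1 / s.x⌋ ^ 2
  mem_Ioo := (one_div s.x ▸ s.irrational.inv).fract_mem_Ioo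
  irrational := (one_div s.x ▸ s.irrational.inv).sub_intCast _
  a_ne_zero := s.c_ne_zero
  root := by
    push_cast
    exact quadratic_one_div_sub _ s.mem_Ioo.1.ne' s.root

lemma step_x : s.step.x = gaussMap s.x := by
  rw [gaussMap, if_pos ⟨s.irrational, s.mem_Ioo⟩]
  rfl

lemma iterate_step_x (n : ℕ) : (step^[n] s).x = gaussMap^[n] s.x :=
  Semiconj.iterate_right (f := x) step_x n s

lemma step_conj : s.step.conj = 1 / s.conj - ⌊1 / s.x⌋ := by
  have hx := s.mem_Ioo.1.ne'
  have ha := s.a_cast_ne_zero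
  have hc : (s.c : ℝ) ≠ 0 := Int.cast_ne_zero.2 s.c_ne_zero
  have hconj : s.conj = s.c / (s.a * s.x) := by
    rw [eq_div_iff (mul_ne_zero ha hx), mul_comm, mul_assoc, x_mul_conj]
    field_simp
  rw [hconj, conj, step]
  push_cast
  field_simp
  linear_combination -s.root

lemma step_disc : s.step.disc = s.disc := by
  simp only [disc, step]
  ring

lemma iterate_step_disc (n : ℕ) : (step^[n] s).disc = s.disc :=
  congrFun (iterate_invariant (g := disc) (funext step_disc) n) s

lemma step_conj_lt_neg_one (h : s.conj < 0) : s.step.conj < -1 := by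
  have hn : (1 : ℝ) ≤ ⌊1 / s.x⌋ := by exact_mod_cast one_le_floor_one_div s.mem_Ioo
  rw [step_conj]
  linarith [one_div_neg.2 h]

lemma IsReduced.step {s : GaussPoint} (h : s.IsReduced) : s.step.IsReduced :=
  s.step_conj_lt_neg_one (h.trans neg_one_lt_zero)

lemma IsReduced.iterate_step {s : GaussPoint} (h : s.IsReduced) (n : ℕ) :
    (GaussPoint.step^[n] s).IsReduced := by
  induction n with
  | zero => exact h
  | succ n ih => exact iterate_succ_apply' GaussPoint.step n s ▸ ih.step

lemma conj_lt_one_of_step_conj_pos (h₀ : 0 < s.conj) (h₁ : 0 < s.step.conj) : s.conj < 1 := by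
  have hn : (1 : ℝ) ≤ ⌊1 / s.x⌋ := by exact_mod_cast one_le_floor_one_div s.mem_Ioo
  rw [step_conj] at h₁
  exact (one_lt_div h₀).1 (by linarith)

lemma abs_conj_sub_x_lt_step (h₀ : 0 < s.conj) (h₁ : s.conj < 1) :
    |s.conj - s.x| < |s.step.conj - s.step.x| := by
  have hx := s.mem_Ioo
  have hprod : 0 < s.conj * s.x := mul_pos h₀ hx.1
  have hdiff : s.step.conj - s.step.x = (s.x - s.conj) / (s.conj * s.x) := by
    have := hx.1.ne'
    rw [step_conj, step]
    field_simp
    ring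
  rw [hdiff, abs_div, abs_of_pos hprod, abs_sub_comm, lt_div_iff₀ hprod]
  have hne : 0 < |s.x - s.conj| := abs_pos.2 (sub_ne_zero.2 s.conj_ne_x.symm)
  have : s.conj * s.x < 1 := mul_lt_one_of_nonneg_of_lt_one_left h₀.le h₁ hx.2.le
  nlinarith

lemma exists_iterate_step_conj_neg {p : ℕ} (hp : 0 < p) (h : IsPeriodicPt gaussMap p s.x) :
    ∃ t, (step^[t] s).conj < 0 := by
  by_contra! hnonneg
  have hsucc (t : ℕ) : step^[t + 1] s = (step^[t] s).step :=
    iterate_succ_apply' _ _ _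
  have hpos (t : ℕ) : 0 < (step^[t] s).conj :=
    (hnonneg t).lt_of_ne' (conj_ne_zero _)
  have hmono : StrictMono fun t ↦ |(step^[t] s).conj - (step^[t] s).x| := by
    refine strictMono_nat_of_lt_succ fun t ↦ ?_
    have hlt : (step^[t] s).conj < 1 :=
      conj_lt_one_of_step_conj_pos _ (hpos t) (hsucc t ▸ hpos (t + 1))
    simpa only [hsucc] using abs_conj_sub_x_lt_step _ (hpos t) hlt
  have hx : (step^[p] s).x = s.x := (iterate_step_x s p).trans h
  refine (hmono hp).ne' ?_
  simp only [iterate_zero, id_eq, hx, conj_eq_of_x_eq hx]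

lemma isReduced_of_mem_periodicPts (h : s.x ∈ periodicPts gaussMap) : s.IsReduced := by
  obtain ⟨p, hp, hper⟩ := h
  obtain ⟨t, ht⟩ := s.exists_iterate_step_conj_neg hp hper
  have hred (n : ℕ) : (step^[n + (t + 1)] s).IsReduced := by
    rw [iterate_add_apply, iterate_succ_apply']
    exact IsReduced.iterate_step (step_conj_lt_neg_one _ ht) n
  have hle : t + 1 ≤ p * (t + 1) := Nat.le_mul_of_pos_left _ hp
  have hx : (step^[p * (t + 1)] s).x = s.x :=
    (iterate_step_x _ _).trans (hper.mul_const (t + 1))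
  have := hred (p * (t + 1) - (t + 1))
  rwa [Nat.sub_add_cancel hle, IsReduced, conj_eq_of_x_eq hx] at this

lemma IsReduced.a_mul_c_neg {s : GaussPoint} (h : s.IsReduced) : s.a * s.c < 0 := by
  have ha := s.a_cast_ne_zero
  have hac : (s.a * s.c : ℝ) = s.a ^ 2 * (s.x * s.conj) := by
    rw [x_mul_conj]
    field_simp
  have hneg : (s.a * s.c : ℝ) < 0 := by
    rw [hac]
    exact mul_neg_of_pos_of_neg (by positivity)
      (mul_neg_of_pos_of_neg s.mem_Ioo.1 (h.trans neg_one_lt_zero))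
  exact_mod_cast hneg

lemma IsReduced.coeffs_mem_Icc {s : GaussPoint} (h : s.IsReduced) :
    s.coeffs ∈ Icc (-(s.disc, s.disc, s.disc)) (s.disc, s.disc, s.disc) := by
  have hac := h.a_mul_c_neg
  have ha := Int.one_le_abs s.a_ne_zero
  have hc := Int.one_le_abs s.c_ne_zero
  have hb : (s.b.natAbs : ℤ) ≤ s.b ^ 2 := Int.natAbs_le_self_sq s.b
  rw [Int.natCast_natAbs] at hb
  have hac' : |s.a| * |s.c| = -(s.a * s.c) := by rw [← abs_mul, abs_of_neg hac]
  have hD : |s.a| ≤ s.disc ∧ |s.b| ≤ s.disc ∧ |s.c| ≤ s.disc := by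
    unfold disc
    refine ⟨?_, ?_, ?_⟩ <;> nlinarith [abs_nonneg s.b]
  simp only [abs_le] at hD
  simp only [coeffs, mem_Icc, Prod.mk_le_mk, Prod.neg_mk]
  tauto

lemma IsReduced.x_eq_of_coeffs_eq {s t : GaussPoint} (hs : s.IsReduced)
    (h : s.coeffs = t.coeffs) : s.x = t.x := by
  simp only [coeffs, Prod.mk.injEq] at h
  obtain ⟨ha, hb, hc⟩ := h
  have ht := t.root
  rw [← ha, ← hb, ← hc] at ht
  have hprod : (t.x - s.x) * (s.x + t.x + s.b / s.a) = 0 := by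
    have := s.a_cast_ne_zero
    field_simp
    linear_combination ht - s.root
  refine (eq_of_sub_eq_zero ((mul_eq_zero.1 hprod).resolve_right fun hsum ↦ ?_)).symm
  have hconj : t.x = s.conj := by rw [conj, neg_div]; linarith
  have hneg : s.conj < -1 := hs
  linarith [t.mem_Ioo.1]

lemma IsReduced.x_eq {s : GaussPoint} (h : s.IsReduced) :
    s.x = 1 / (s.step.x - ⌈s.step.conj⌉) := by
  have hinv : 1 / s.conj ∈ Ioo (-1) 0 := by
    have hc : s.conj < -1 := h
    constructor
    · rw [lt_one_div_of_neg] <;> linarith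
    · exact one_div_neg.2 (by linarith)
  have hceil : ⌈s.step.conj⌉ = -⌊1 / s.x⌋ := by
    rw [Int.ceil_eq_iff, step_conj]
    push_cast
    constructor <;> linarith [hinv.1, hinv.2]
  rw [hceil, GaussPoint.step]
  push_cast
  rw [sub_neg_eq_add, sub_add_cancel, one_div_one_div]

def reducedPoints : Set ℝ := {y | ∃ s : GaussPoint, s.IsReduced ∧ s.x = y}

lemma mapsTo_gaussMap_reducedPoints : MapsTo gaussMap reducedPoints reducedPoints := by
  rintro _ ⟨s, hs, rfl⟩
  exact ⟨s.step, hs.step, s.step_x⟩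

lemma injOn_gaussMap_reducedPoints : InjOn gaussMap reducedPoints := by
  rintro _ ⟨s, hs, rfl⟩ _ ⟨t, ht, rfl⟩ h
  rw [← step_x, ← step_x] at h
  rw [hs.x_eq, ht.x_eq, h, conj_eq_of_x_eq h]

lemma IsReduced.mem_periodicPts {s : GaussPoint} (h : s.IsReduced) :
    s.x ∈ periodicPts gaussMap := by
  have hred := h.iterate_step
  obtain ⟨u, v, huv, heq⟩ := Set.Finite.exists_lt_map_eq_of_forall_mem
    (f := fun n ↦ (GaussPoint.step^[n] s).coeffs)
    (fun n ↦ by simpa only [iterate_step_disc] using (hred n).coeffs_mem_Icc) (finite_Icc _ _)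
  have hmem (n : ℕ) : gaussMap^[n] s.x ∈ reducedPoints := ⟨_, hred n, iterate_step_x s n⟩
  refine mk_mem_periodicPts (Nat.sub_pos_of_lt huv)
    ((injOn_gaussMap_reducedPoints.iterate mapsTo_gaussMap_reducedPoints u) (hmem _) (hmem 0) ?_)
  rw [← iterate_add_apply, Nat.add_sub_cancel' huv.le, ← iterate_step_x, ← iterate_step_x]
  exact ((hred u).x_eq_of_coeffs_eq heq).symm

theorem mem_periodicPts_iff_isReduced : s.x ∈ periodicPts gaussMap ↔ s.IsReduced :=
  ⟨s.isReduced_of_mem_periodicPts, IsReduced.mem_periodicPts⟩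

end GaussPoint

/-- Galois' theorem: a quadratic irrational `ω ∈ (0,1)` is purely periodic under the
Gauss map iff its Galois conjugate `ω' = -b/a - ω` satisfies `ω' < -1`. -/
theorem gauss_purely_periodic_iff
    (ω : ℝ) (hmem : ω ∈ Set.Ioo (0 : ℝ) 1) (hirr : Irrational ω)
    (a b c : ℤ) (ha : a ≠ 0)
    (hroot : (a : ℝ) * ω ^ 2 + (b : ℝ) * ω + (c : ℝ) = 0) :
    (∃ p : ℕ, 1 ≤ p ∧ gaussMap^[p] ω = ω) ↔ -(b : ℝ) / (a : ℝ) - ω < -1 :=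
  (GaussPoint.mk ω a b c hmem hirr ha hroot).mem_periodicPts_iff_isReduced
end

section
/- Let ω ∈ (0,1) be a quadratic irrational and let Φ be the Farey map, Φ(x) = x/(1−x) for x ∈ [0,1/2] and Φ(x) = (1−x)/x for x ∈ [1/2,1]. Then ω is purely periodic under Φ (i.e. Φ^[p](ω) = ω for some integer p ≥ 1) if and only if its Galois conjugate ω' satisfies ω' < 0. -/
/-
The Farey map acts on `(0,1)` by one of the two Möbius branches `t ↦ t/(1-t)` and
`t ↦ (1-t)/t`. If `ω` is periodic, it is a fixed point of a composition of the inverse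
branches `u ↦ u/(1+u)`, `u ↦ 1/(1+u)`, i.e. of a Möbius map `u ↦ (Pu+Q)/(Ru+S)` with
nonnegative integer coefficients; its fixed points `ω, ω'` are the roots of
`RX² + (S-P)X - Q`, so `ωω' = -Q/R ≤ 0`.
Conversely, let the branch used at `x` act on the conjugate `y` as well. Both branches
preserve `y < 0`, and they transport the integer quadratic with roots `x, y`, keeping its
discriminant `D`. Roots of opposite signs force `AC < 0`, so `B² - 4AC = D` bounds the
coefficients and the orbit of `(x, y)` is finite. It is also injective, because the new
conjugate lies in `(-1,0)` exactly after the left branch; a finite orbit of an injective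
map is purely periodic.
-/

/-- The Farey map `Φ(x) = min(x/(1-x), (1-x)/x)`, i.e. `x/(1-x)` on `[0,1/2]` and
`(1-x)/x` on `[1/2,1]`. -/
noncomputable def fareyMap (x : ℝ) : ℝ :=
  min (x / (1 - x)) ((1 - x) / x)

open Set Function

theorem Set.InjOn.mem_periodicPts {α : Type*} {f : α → α} {s : Set α} (hinj : InjOn f s)
    (hmaps : MapsTo f s s) (hs : s.Finite) {x : α} (hx : x ∈ s) : x ∈ periodicPts f := by
  have := hs.to_subtype
  obtain ⟨n, hn, hper⟩ := (hmaps.restrict_inj.2 hinj).mem_periodicPts ⟨x, hx⟩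
  refine mk_mem_periodicPts hn ?_
  simpa [IsPeriodicPt, IsFixedPt, MapsTo.coe_iterate_restrict] using congrArg Subtype.val hper

theorem Irrational.eq_zero_of_intCast_mul_add_eq_zero {x : ℝ} (hx : Irrational x) {m n : ℤ}
    (h : m * x + n = 0) : m = 0 ∧ n = 0 := by
  have hm : m = 0 := by
    by_contra hm
    exact ((hx.intCast_mul hm).add_intCast n).ne_zero h
  exact ⟨hm, by simpa [hm] using h⟩

section FareyMap

variable {x : ℝ}

theorem fareyMap_of_le_half (h0 : 0 < x) (h : x ≤ 1 / 2) : fareyMap x = x / (1 - x) := by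
  refine min_eq_left ?_
  rw [div_le_div_iff₀ (by linarith) h0]
  nlinarith

theorem fareyMap_of_half_le (h : 1 / 2 ≤ x) (h1 : x < 1) : fareyMap x = (1 - x) / x := by
  refine min_eq_right ?_
  rw [div_le_div_iff₀ (by linarith) (by linarith)]
  nlinarith

theorem Irrational.ne_half (hx : Irrational x) : x ≠ 1 / 2 := by
  simpa using hx.ne_rat (1 / 2)

theorem Irrational.div_one_sub (hx : Irrational x) : Irrational (x / (1 - x)) := by
  have h : x / (1 - x) = (1 - x)⁻¹ - 1 := by
    field_simp [sub_ne_zero.2 hx.ne_one.symm]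
    ring
  rw [h]
  exact_mod_cast ((hx.natCast_sub 1).inv).sub_natCast 1

theorem Irrational.one_sub_div (hx : Irrational x) : Irrational ((1 - x) / x) := by
  have h : (1 - x) / x = x⁻¹ - 1 := by
    field_simp [hx.ne_zero]
  rw [h]
  exact_mod_cast hx.inv.sub_natCast 1

theorem mapsTo_fareyMap :
    MapsTo fareyMap {x | x ∈ Ioo 0 1 ∧ Irrational x} {x | x ∈ Ioo 0 1 ∧ Irrational x} := by
  rintro x ⟨⟨h0, h1⟩, hirr⟩
  rcases hirr.ne_half.lt_or_gt with hlt | hgt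
  · rw [fareyMap_of_le_half h0 hlt.le]
    exact ⟨⟨by positivity, (div_lt_one (by linarith)).2 (by linarith)⟩, hirr.div_one_sub⟩
  · rw [fareyMap_of_half_le hgt.le h1]
    exact ⟨⟨div_pos (by linarith) h0, (div_lt_one h0).2 (by linarith)⟩, hirr.one_sub_div⟩

theorem mul_one_add_fareyMap (h0 : 0 < x) (h1 : x < 1) :
    x * (1 + fareyMap x) = fareyMap x ∨ x * (1 + fareyMap x) = 1 := by
  rcases le_total x (1 / 2) with h | h
  · left
    rw [fareyMap_of_le_half h0 h]
    field_simp [show 1 - x ≠ 0 by linarith]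
    ring
  · right
    rw [fareyMap_of_half_le h h1]
    field_simp
    ring

theorem exists_nat_mobius_fareyMap_iterate (hx : x ∈ Ioo 0 1) (hirr : Irrational x) (n : ℕ) :
    ∃ P Q R S : ℕ, (n ≠ 0 → 0 < R) ∧ 0 < S ∧
      x * (R * fareyMap^[n] x + S) = P * fareyMap^[n] x + Q := by
  induction n with
  | zero => exact ⟨1, 0, 0, 1, by simp, one_pos, by simp⟩
  | succ n ih =>
    obtain ⟨P, Q, R, S, -, hS, hrel⟩ := ih
    obtain ⟨⟨h0, h1⟩, -⟩ := mapsTo_fareyMap.iterate n ⟨hx, hirr⟩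
    rw [iterate_succ_apply']
    rcases mul_one_add_fareyMap h0 h1 with hbranch | hbranch
    · refine ⟨P + Q, Q, R + S, S, fun _ => by omega, hS, ?_⟩
      push_cast
      linear_combination (1 + fareyMap (fareyMap^[n] x)) * hrel + (P - x * R) * hbranch
    · refine ⟨Q, P + Q, S, R + S, fun _ => hS, by omega, ?_⟩
      push_cast
      linear_combination (1 + fareyMap (fareyMap^[n] x)) * hrel + (P - x * R) * hbranch

end FareyMap

structure IsRootPair (A B C : ℤ) (x y : ℝ) : Prop where
  ne_zero : A ≠ 0
  sum : (B : ℝ) = -A * (x + y)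
  prod : (C : ℝ) = A * (x * y)

namespace IsRootPair

variable {A B C : ℤ} {x y : ℝ}

theorem of_root (hA : A ≠ 0) (hx : (A : ℝ) * x ^ 2 + B * x + C = 0) :
    IsRootPair A B C x (-(B : ℝ) / A - x) := by
  have hA' : (A : ℝ) ≠ 0 := Int.cast_ne_zero.2 hA
  refine ⟨hA, by field_simp; ring, ?_⟩
  field_simp
  linear_combination hx

theorem left_step (h : IsRootPair A B C x y) (hx : x ≠ 1) (hy : y ≠ 1) :
    IsRootPair (A + B + C) (B + 2 * C) C (x / (1 - x)) (y / (1 - y)) := by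
  have hx' : 1 - x ≠ 0 := sub_ne_zero.2 hx.symm
  have hy' : 1 - y ≠ 0 := sub_ne_zero.2 hy.symm
  have hlead : ((A + B + C : ℤ) : ℝ) = A * (1 - x) * (1 - y) := by
    push_cast [h.sum, h.prod]
    ring
  refine ⟨fun h0 => ?_, ?_, ?_⟩
  · rw [h0, Int.cast_zero] at hlead
    exact mul_ne_zero (mul_ne_zero (Int.cast_ne_zero.2 h.ne_zero) hx') hy' hlead.symm
  · rw [hlead]
    push_cast [h.sum, h.prod]
    field_simp
    ring
  · rw [hlead, h.prod]
    field_simp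

theorem right_step (h : IsRootPair A B C x y) (hx : x ≠ 0) (hy : y ≠ 0) :
    IsRootPair C (B + 2 * C) (A + B + C) ((1 - x) / x) ((1 - y) / y) := by
  refine ⟨fun h0 => ?_, ?_, ?_⟩
  · have hC := h.prod
    rw [h0, Int.cast_zero] at hC
    exact mul_ne_zero (Int.cast_ne_zero.2 h.ne_zero) (mul_ne_zero hx hy) hC.symm
  · push_cast [h.sum, h.prod]
    field_simp
    ring
  · push_cast [h.sum, h.prod]
    field_simp
    ring

theorem abs_le_discrim (h : IsRootPair A B C x y) (hx : 0 < x) (hy : y < 0) :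
    |A| ≤ discrim A B C ∧ |B| ≤ discrim A B C ∧ |C| ≤ discrim A B C := by
  have hAC : A * C < 0 := by
    have : ((A * C : ℤ) : ℝ) < 0 := by
      push_cast [h.prod]
      have hA : (0 : ℝ) < A * A := mul_self_pos.2 (Int.cast_ne_zero.2 h.ne_zero)
      nlinarith [mul_pos hA (mul_pos hx (neg_pos.2 hy))]
    exact_mod_cast this
  have hA := Int.one_le_abs h.ne_zero
  have hC := Int.one_le_abs (right_ne_zero_of_mul hAC.ne)
  have habs : |A| * |C| = -(A * C) := by rw [← abs_mul, abs_of_neg hAC]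
  have hB : |B| ≤ B ^ 2 := by simpa using Int.natAbs_le_self_sq B
  unfold discrim
  refine ⟨?_, ?_, ?_⟩ <;> nlinarith [sq_nonneg B]

theorem eq_of_pos_of_neg {x' y' : ℝ} (h : IsRootPair A B C x y) (h' : IsRootPair A B C x' y')
    (hx : 0 < x) (hy' : y' < 0) : x = x' ∧ y = y' := by
  have hA : (A : ℝ) ≠ 0 := Int.cast_ne_zero.2 h.ne_zero
  have hsum : x + y = x' + y' := mul_left_cancel₀ (neg_ne_zero.2 hA) (h.sum.symm.trans h'.sum)
  have hprod : x * y = x' * y' := mul_left_cancel₀ hA (h.prod.symm.trans h'.prod)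
  have hfactor : (x - x') * (x - y') = 0 := by linear_combination x * hsum - hprod
  have hxx' : x = x' := sub_eq_zero.1 ((mul_eq_zero.1 hfactor).resolve_right (by linarith))
  exact ⟨hxx', by linarith⟩

end IsRootPair

theorem conj_neg_of_fareyMap_periodic {A B C : ℤ} {x y : ℝ} (hx : x ∈ Ioo 0 1)
    (hirr : Irrational x) (h : IsRootPair A B C x y) {p : ℕ} (hp : 1 ≤ p)
    (hper : fareyMap^[p] x = x) : y < 0 := by
  obtain ⟨P, Q, R, S, hR, -, hrel⟩ := exists_nat_mobius_fareyMap_iterate hx hirr p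
  rw [hper] at hrel
  have hlin : ((A * (S - P) - R * B : ℤ) : ℝ) * x + ((-(A * Q) - R * C : ℤ) : ℝ) = 0 := by
    push_cast [h.sum, h.prod]
    linear_combination A * hrel
  have hRC : R * C = -(A * Q : ℤ) := by
    linarith [(hirr.eq_zero_of_intCast_mul_add_eq_zero hlin).2]
  have hprod : (R : ℝ) * (x * y) = -Q := by
    have hRC' : ((R * C : ℤ) : ℝ) = ((-(A * Q) : ℤ) : ℝ) := congrArg _ hRC
    push_cast [h.prod] at hRC'
    exact mul_left_cancel₀ (Int.cast_ne_zero.2 h.ne_zero) (by linear_combination hRC')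
  have hy : y ≠ 0 := by
    rintro rfl
    have hlin' : (A : ℝ) * x + B = 0 := by rw [h.sum]; ring
    exact h.ne_zero (hirr.eq_zero_of_intCast_mul_add_eq_zero hlin').1
  have hR' : (0 : ℝ) < R := by exact_mod_cast hR (by omega)
  have hxy : x * y ≤ 0 := by nlinarith [(Q.cast_nonneg : (0 : ℝ) ≤ Q)]
  exact lt_of_le_of_ne (nonpos_of_mul_nonpos_right hxy hx.1) hy

noncomputable def fareyPairMap (p : ℝ × ℝ) : ℝ × ℝ :=
  (fareyMap p.1, if p.1 < 1 / 2 then p.2 / (1 - p.2) else (1 - p.2) / p.2)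

theorem semiconj_fst_fareyPairMap : Semiconj Prod.fst fareyPairMap fareyMap := fun _ => rfl

theorem injOn_fareyPairMap : InjOn fareyPairMap {p | p.1 ∈ Ioo 0 1 ∧ p.2 < 0} := by
  rintro ⟨x, y⟩ ⟨⟨hx0, hx1⟩, hy⟩ ⟨x', y'⟩ ⟨⟨hx0', hx1'⟩, hy'⟩ h
  simp only [fareyPairMap, Prod.mk.injEq] at h
  obtain ⟨hfst, hsnd⟩ := h
  have hleft {t : ℝ} (ht : t < 0) : -1 < t / (1 - t) := by
    rw [lt_div_iff₀ (by linarith)]; linarith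
  have hright {t : ℝ} (ht : t < 0) : (1 - t) / t < -1 := by
    rw [div_lt_iff_of_neg ht]; linarith
  split_ifs at hsnd with hlt hlt' hlt'
  · rw [fareyMap_of_le_half hx0 hlt.le, fareyMap_of_le_half hx0' hlt'.le,
      div_eq_div_iff (by linarith) (by linarith)] at hfst
    rw [div_eq_div_iff (by linarith) (by linarith)] at hsnd
    simp only [Prod.mk.injEq]
    constructor <;> linarith
  · linarith [hleft hy, hright hy']
  · linarith [hright hy, hleft hy']
  · rw [fareyMap_of_half_le (not_lt.1 hlt) hx1, fareyMap_of_half_le (not_lt.1 hlt') hx1',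
      div_eq_div_iff (by linarith) (by linarith)] at hfst
    rw [div_eq_div_iff (by linarith) (by linarith)] at hsnd
    simp only [Prod.mk.injEq]
    constructor <;> linarith

def reducedPairs (D : ℤ) : Set (ℝ × ℝ) :=
  {p | p.1 ∈ Ioo 0 1 ∧ Irrational p.1 ∧ p.2 < 0 ∧
    ∃ A B C : ℤ, discrim A B C = D ∧ IsRootPair A B C p.1 p.2}

theorem finite_reducedPairs (D : ℤ) : (reducedPairs D).Finite := by
  have hfiber (T : ℤ × ℤ × ℤ) : {p : ℝ × ℝ |
      0 < p.1 ∧ p.2 < 0 ∧ IsRootPair T.1 T.2.1 T.2.2 p.1 p.2}.Subsingleton := by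
    rintro ⟨x, y⟩ ⟨hx, -, h⟩ ⟨x', y'⟩ ⟨-, hy', h'⟩
    obtain ⟨rfl, rfl⟩ := h.eq_of_pos_of_neg h' hx hy'
    rfl
  refine ((finite_Icc (-D, -D, -D) (D, D, D)).biUnion fun T _ => (hfiber T).finite).subset ?_
  rintro p ⟨⟨hx, -⟩, -, hy, A, B, C, rfl, h⟩
  obtain ⟨hA, hB, hC⟩ := h.abs_le_discrim hx hy
  refine mem_biUnion (x := (A, B, C)) ?_ ⟨hx, hy, h⟩
  simp only [mem_Icc, Prod.mk_le_mk]
  exact ⟨⟨(abs_le.1 hA).1, (abs_le.1 hB).1, (abs_le.1 hC).1⟩,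
    ⟨(abs_le.1 hA).2, (abs_le.1 hB).2, (abs_le.1 hC).2⟩⟩

theorem mapsTo_fareyPairMap (D : ℤ) : MapsTo fareyPairMap (reducedPairs D) (reducedPairs D) := by
  rintro ⟨x, y⟩ ⟨hx, hirr, hy, A, B, C, hD, h⟩
  obtain ⟨hx', hirr'⟩ := mapsTo_fareyMap ⟨hx, hirr⟩
  refine ⟨hx', hirr', ?_⟩
  simp only [fareyPairMap]
  split_ifs with hlt
  · rw [fareyMap_of_le_half hx.1 hlt.le]
    refine ⟨div_neg_of_neg_of_pos hy (by linarith), A + B + C, B + 2 * C, C, ?_,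
      h.left_step hirr.ne_one (by linarith)⟩
    rw [← hD]; unfold discrim; ring
  · rw [fareyMap_of_half_le (not_lt.1 hlt) hx.2]
    refine ⟨div_neg_of_pos_of_neg (by linarith) hy, C, B + 2 * C, A + B + C, ?_,
      h.right_step hirr.ne_zero hy.ne⟩
    rw [← hD]; unfold discrim; ring

/-- A quadratic irrational `ω ∈ (0,1)` is purely periodic under the Farey map iff its
Galois conjugate `ω' = -b/a - ω` satisfies `ω' < 0`. -/
theorem farey_purely_periodic_iff
    (ω : ℝ) (hmem : ω ∈ Set.Ioo (0 : ℝ) 1) (hirr : Irrational ω)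
    (a b c : ℤ) (ha : a ≠ 0)
    (hroot : (a : ℝ) * ω ^ 2 + (b : ℝ) * ω + (c : ℝ) = 0) :
    (∃ p : ℕ, 1 ≤ p ∧ fareyMap^[p] ω = ω) ↔ -(b : ℝ) / (a : ℝ) - ω < 0 := by
  have hpair := IsRootPair.of_root ha hroot
  constructor
  · rintro ⟨p, hp, hper⟩
    exact conj_neg_of_fareyMap_periodic hmem hirr hpair hp hper
  · intro hneg
    have h0 : (ω, -(b : ℝ) / a - ω) ∈ reducedPairs (discrim a b c) :=
      ⟨hmem, hirr, hneg, a, b, c, rfl, hpair⟩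
    have hinj : InjOn fareyPairMap (reducedPairs (discrim a b c)) :=
      injOn_fareyPairMap.mono fun _ hp => And.intro hp.1 hp.2.2.1
    obtain ⟨p, hp, hper⟩ := semiconj_fst_fareyPairMap.mapsTo_periodicPts
      (hinj.mem_periodicPts (mapsTo_fareyPairMap _) (finite_reducedPairs _) h0)
    exact ⟨p, hp, hper⟩
end

section
/- A 2×2 integer matrix M has all entries nonnegative and determinant equal to 1 or −1 if and only if M belongs to the multiplicative submonoid of 2×2 integer matrices generated by L = [[1,0],[1,1]], N = [[1,1],[0,1]] and F = [[0,1],[1,0]]. -/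
/-!
Nonnegative matrices with determinant `±1` form a monoid containing `L`, `N` and `F`. Conversely,
if all entries of such a matrix are positive, one row dominates the other entrywise, so the matrix
is `N` or `L` times a matrix of the same kind with smaller entry sum; this descent ends at a matrix
with a zero entry, which is a power of `N` or `L`, possibly multiplied by `F` on one side.
-/

open Matrix

section NonnegUnimodular

variable (R n : Type*) [CommRing R] [PartialOrder R] [IsOrderedRing R] [Fintype n] [DecidableEq n]

def nonnegUnimodular : Submonoid (Matrix n n R) where
  carrier := {M | (∀ i j, 0 ≤ M i j) ∧ IsUnit M.det}
  mul_mem' := by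
    rintro M M' ⟨hM, hdet⟩ ⟨hM', hdet'⟩
    refine ⟨fun i j => ?_, by simpa only [det_mul] using hdet.mul hdet'⟩
    exact Finset.sum_nonneg fun k _ => mul_nonneg (hM i k) (hM' k j)
  one_mem' := by
    refine ⟨fun i j => ?_, by simp⟩
    rw [one_apply]
    split_ifs <;> simp

variable {R n} in
theorem mem_nonnegUnimodular {M : Matrix n n R} :
    M ∈ nonnegUnimodular R n ↔ (∀ i j, 0 ≤ M i j) ∧ IsUnit M.det :=
  Iff.rfl

end NonnegUnimodular

theorem upperUnitriangular_pow {R : Type*} [CommRing R] (a : R) (k : ℕ) :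
    !![1, a; 0, 1] ^ k = !![1, k * a; 0, 1] := by
  induction k with
  | zero => simp [one_fin_two]
  | succ k ih => rw [pow_succ, ih, mul_fin_two]; simp [add_mul, add_comm]

theorem lowerUnitriangular_pow {R : Type*} [CommRing R] (a : R) (k : ℕ) :
    !![1, 0; a, 1] ^ k = !![1, 0; k * a, 1] := by
  induction k with
  | zero => simp [one_fin_two]
  | succ k ih => rw [pow_succ, ih, mul_fin_two]; simp [add_mul]

theorem Int.eq_one_and_eq_one_of_isUnit_mul {a b : ℤ} (ha : 0 ≤ a) (hb : 0 ≤ b)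
    (h : IsUnit (a * b)) : a = 1 ∧ b = 1 := by
  obtain ⟨ha', hb'⟩ := IsUnit.mul_iff.mp h
  rw [Int.isUnit_iff] at ha' hb'
  omega

/-- Otherwise `a * d - b * c` would be at least `b + c + 1` or at most `-(a + d + 1)`. -/
theorem rows_comparable_of_isUnit_det {a b c d : ℤ} (ha : 0 < a) (hb : 0 < b) (hc : 0 < c)
    (hd : 0 < d) (hdet : IsUnit (a * d - b * c)) : (c ≤ a ∧ d ≤ b) ∨ (a ≤ c ∧ b ≤ d) := by
  rw [Int.isUnit_iff] at hdet
  by_contra! h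
  rcases lt_or_ge c a with hca | hac
  · have hbd : b < d := by grind
    have : (c + 1) * (b + 1) ≤ a * d := mul_le_mul hca hbd (by omega) ha.le
    rcases hdet with hdet | hdet <;> linarith
  · have hca : a < c := by grind
    have hdb : d < b := by grind
    have : (a + 1) * (d + 1) ≤ c * b := mul_le_mul hca hdb (by omega) hc.le
    rcases hdet with hdet | hdet <;> linarith

section Generators

local notation "𝓛" => (!![1, 0; 1, 1] : Matrix (Fin 2) (Fin 2) ℤ)
local notation "𝓝" => (!![1, 1; 0, 1] : Matrix (Fin 2) (Fin 2) ℤ)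
local notation "𝓕" => (!![0, 1; 1, 0] : Matrix (Fin 2) (Fin 2) ℤ)
local notation "𝓜" => Submonoid.closure ({𝓛, 𝓝, 𝓕} : Set (Matrix (Fin 2) (Fin 2) ℤ))

theorem closure_LNF_le_nonnegUnimodular : 𝓜 ≤ nonnegUnimodular ℤ (Fin 2) := by
  rw [Submonoid.closure_le]
  rintro M (rfl | rfl | rfl) <;>
    refine ⟨fun i j => by fin_cases i <;> fin_cases j <;> simp, by simp [det_fin_two]⟩

theorem upperUnitriangular_mem_closure_LNF {b : ℤ} (hb : 0 ≤ b) : !![1, b; 0, 1] ∈ 𝓜 := by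
  lift b to ℕ using hb
  simpa [upperUnitriangular_pow] using
    pow_mem (Submonoid.subset_closure (by simp) : 𝓝 ∈ 𝓜) b

theorem lowerUnitriangular_mem_closure_LNF {c : ℤ} (hc : 0 ≤ c) : !![1, 0; c, 1] ∈ 𝓜 := by
  lift c to ℕ using hc
  simpa [lowerUnitriangular_pow] using
    pow_mem (Submonoid.subset_closure (by simp) : 𝓛 ∈ 𝓜) c

theorem mem_closure_LNF_of_entry_eq_zero {a b c d : ℤ} (ha : 0 ≤ a) (hb : 0 ≤ b) (hc : 0 ≤ c)
    (hd : 0 ≤ d) (hdet : IsUnit (a * d - b * c)) (hzero : a = 0 ∨ b = 0 ∨ c = 0 ∨ d = 0) :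
    !![a, b; c, d] ∈ 𝓜 := by
  have hF : 𝓕 ∈ 𝓜 := Submonoid.subset_closure (by simp)
  rcases hzero with rfl | rfl | rfl | rfl
  · obtain ⟨rfl, rfl⟩ := Int.eq_one_and_eq_one_of_isUnit_mul hb hc (by simpa using hdet.neg)
    have : !![0, 1; 1, d] = 𝓕 * !![1, d; 0, 1] := by simp
    exact this ▸ mul_mem hF (upperUnitriangular_mem_closure_LNF hd)
  · obtain ⟨rfl, rfl⟩ := Int.eq_one_and_eq_one_of_isUnit_mul ha hd (by simpa using hdet)
    exact lowerUnitriangular_mem_closure_LNF hc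
  · obtain ⟨rfl, rfl⟩ := Int.eq_one_and_eq_one_of_isUnit_mul ha hd (by simpa using hdet)
    exact upperUnitriangular_mem_closure_LNF hb
  · obtain ⟨rfl, rfl⟩ := Int.eq_one_and_eq_one_of_isUnit_mul hb hc (by simpa using hdet.neg)
    have : !![a, 1; 1, 0] = !![1, a; 0, 1] * 𝓕 := by simp
    exact this ▸ mul_mem (upperUnitriangular_mem_closure_LNF ha) hF

theorem mem_closure_LNF_of_nonneg {a b c d : ℤ} (ha : 0 ≤ a) (hb : 0 ≤ b) (hc : 0 ≤ c)
    (hd : 0 ≤ d) (hdet : IsUnit (a * d - b * c)) : !![a, b; c, d] ∈ 𝓜 := by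
  by_cases hzero : a = 0 ∨ b = 0 ∨ c = 0 ∨ d = 0
  · exact mem_closure_LNF_of_entry_eq_zero ha hb hc hd hdet hzero
  simp only [not_or] at hzero
  obtain ⟨ha0, hb0, hc0, hd0⟩ := hzero
  rcases rows_comparable_of_isUnit_det (by omega) (by omega) (by omega) (by omega) hdet with
    ⟨hca, hdb⟩ | ⟨hac, hbd⟩
  · have : !![a, b; c, d] = 𝓝 * !![a - c, b - d; c, d] := by simp
    rw [this]
    refine mul_mem (Submonoid.subset_closure (by simp)) ?_
    exact mem_closure_LNF_of_nonneg (by omega) (by omega) hc hd (by convert hdet using 1; ring)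
  · have : !![a, b; c, d] = 𝓛 * !![a, b; c - a, d - b] := by simp
    rw [this]
    refine mul_mem (Submonoid.subset_closure (by simp)) ?_
    exact mem_closure_LNF_of_nonneg ha hb (by omega) (by omega) (by convert hdet using 1; ring)
termination_by (a + b + c + d).toNat
decreasing_by all_goals omega

theorem nonnegUnimodular_eq_closure_LNF : nonnegUnimodular ℤ (Fin 2) = 𝓜 := by
  refine le_antisymm (fun M ⟨hM, hdet⟩ => ?_) closure_LNF_le_nonnegUnimodular
  rw [eta_fin_two M]
  exact mem_closure_LNF_of_nonneg (hM 0 0) (hM 0 1) (hM 1 0) (hM 1 1) (by rwa [← det_fin_two])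

end Generators

/-- A 2×2 integer matrix has all entries nonnegative and determinant `±1` iff it lies in
the multiplicative submonoid generated by `L = [[1,0],[1,1]]`, `N = [[1,1],[0,1]]` and
`F = [[0,1],[1,0]]`. -/
theorem nonneg_det_pm_one_iff_mem_closure_LNF (M : Matrix (Fin 2) (Fin 2) ℤ) :
    ((∀ i j, 0 ≤ M i j) ∧ (M.det = 1 ∨ M.det = -1)) ↔
      M ∈ Submonoid.closure
        ({!![1, 0; 1, 1], !![1, 1; 0, 1], !![0, 1; 1, 0]} :
          Set (Matrix (Fin 2) (Fin 2) ℤ)) := by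
  rw [← Int.isUnit_iff, ← nonnegUnimodular_eq_closure_LNF, mem_nonnegUnimodular]
end

section
/- A 2×2 integer matrix M has all entries nonnegative and determinant equal to 1 if and only if M belongs to the multiplicative submonoid of 2×2 integer matrices generated by L = [[1,0],[1,1]] and N = [[1,1],[0,1]]. -/
/-!
Left multiplication by `N` subtracts the second row from the first, and by `L` the first from
the second. If `ad - bc = 1` with `a, b, c, d ≥ 0` and the matrix is not the identity, one row
dominates the other entrywise, so one of these row operations stays inside the nonnegative
determinant-one matrices and strictly lowers the sum of the entries. Descending on that sum
writes the matrix as a word in `L` and `N`; conversely both sets are monoids containing `L`, `N`.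
-/

open Matrix

namespace Matrix

variable (n R : Type*) [Fintype n] [DecidableEq n] [CommSemiring R] [PartialOrder R]
  [IsOrderedRing R]

def nonnegSubmonoid : Submonoid (Matrix n n R) where
  carrier := {M | ∀ i j, 0 ≤ M i j}
  one_mem' i j := by
    rcases eq_or_ne i j with rfl | h <;> simp [*]
  mul_mem' hA hB i j :=
    Finset.sum_nonneg fun k _ => mul_nonneg (hA i k) (hB k j)

variable {n R}

@[simp]
theorem mem_nonnegSubmonoid {M : Matrix n n R} : M ∈ nonnegSubmonoid n R ↔ ∀ i j, 0 ≤ M i j :=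
  Iff.rfl

end Matrix

abbrev matL : Matrix (Fin 2) (Fin 2) ℤ := !![1, 0; 1, 1]

abbrev matN : Matrix (Fin 2) (Fin 2) ℤ := !![1, 1; 0, 1]

theorem matN_mul (a b c d : ℤ) : matN * !![a - c, b - d; c, d] = !![a, b; c, d] := by
  simp

theorem matL_mul (a b c d : ℤ) : matL * !![a, b; c - a, d - b] = !![a, b; c, d] := by
  simp

theorem closure_LN_le_nonneg_inf_mker_det :
    Submonoid.closure {matL, matN} ≤ nonnegSubmonoid (Fin 2) ℤ ⊓ MonoidHom.mker detMonoidHom := by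
  rw [Submonoid.closure_le]
  rintro M (rfl | rfl) <;>
    exact ⟨by simp [Fin.forall_fin_two], by simp [MonoidHom.mem_mker, det_fin_two]⟩

theorem rows_comparable_of_det_eq_one {a b c d : ℤ} (ha : 0 ≤ a) (hb : 0 ≤ b) (hc : 0 ≤ c)
    (hdet : a * d - b * c = 1) :
    (a = 1 ∧ b = 0 ∧ c = 0 ∧ d = 1) ∨ (c ≤ a ∧ d ≤ b) ∨ (a ≤ c ∧ b ≤ d) := by
  rcases le_or_gt c a with hca | hac <;> rcases le_or_gt d b with hdb | hbd
  · exact .inr (.inl ⟨hca, hdb⟩)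
  · rcases hca.eq_or_lt with rfl | hca
    · exact .inr (.inr ⟨le_rfl, hbd.le⟩)
    -- `ad ≥ (c + 1)(b + 1)` forces `b = c = 0`, hence `a = d = 1`
    have hb0 : b = 0 := by nlinarith
    have hc0 : c = 0 := by nlinarith
    subst hb0 hc0
    have ha1 : a = 1 := by nlinarith
    subst ha1
    exact .inl ⟨rfl, rfl, rfl, by linarith⟩
  · -- `ad ≤ cd ≤ bc`
    nlinarith
  · exact .inr (.inr ⟨hac.le, hbd.le⟩)

theorem mem_closure_LN_of_nonneg_of_det_eq_one (a b c d : ℤ) (ha : 0 ≤ a) (hb : 0 ≤ b)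
    (hc : 0 ≤ c) (hd : 0 ≤ d) (hdet : a * d - b * c = 1) :
    !![a, b; c, d] ∈ Submonoid.closure {matL, matN} := by
  rcases rows_comparable_of_det_eq_one ha hb hc hdet with
    ⟨rfl, rfl, rfl, rfl⟩ | ⟨hca, hdb⟩ | ⟨hac, hbd⟩
  · rw [← one_fin_two]
    exact one_mem _
  · have hcd : 0 < c + d := by nlinarith
    rw [← matN_mul]
    refine mul_mem (Submonoid.subset_closure (by simp)) ?_
    exact mem_closure_LN_of_nonneg_of_det_eq_one (a - c) (b - d) c d (by omega) (by omega) hc hd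
      (by linear_combination hdet)
  · have hab : 0 < a + b := by nlinarith
    rw [← matL_mul]
    refine mul_mem (Submonoid.subset_closure (by simp)) ?_
    exact mem_closure_LN_of_nonneg_of_det_eq_one a b (c - a) (d - b) ha hb (by omega) (by omega)
      (by linear_combination hdet)
termination_by (a + b + c + d).toNat

/-- A 2×2 integer matrix has all entries nonnegative and determinant `1` iff it lies in
the multiplicative submonoid generated by `L = [[1,0],[1,1]]` and `N = [[1,1],[0,1]]`. -/
theorem nonneg_det_one_iff_mem_closure_LN (M : Matrix (Fin 2) (Fin 2) ℤ) :
    ((∀ i j, 0 ≤ M i j) ∧ M.det = 1) ↔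
      M ∈ Submonoid.closure
        ({!![1, 0; 1, 1], !![1, 1; 0, 1]} : Set (Matrix (Fin 2) (Fin 2) ℤ)) := by
  refine ⟨fun ⟨hM, hdet⟩ => ?_, fun hM => closure_LN_le_nonneg_inf_mker_det hM⟩
  rw [eta_fin_two M]
  rw [det_fin_two] at hdet
  exact mem_closure_LN_of_nonneg_of_det_eq_one _ _ _ _ (hM 0 0) (hM 0 1) (hM 1 0) (hM 1 1) hdet
end

section
/- For a sequence z : ℕ → Matrix (Fin 2) (Fin 2) ℤ with values in {L, N}, let π(z) ∈ [0,1] denote the unique point of ⋂_{t≥0} f_{L·(z 0 ⋯ z (t−1))·L⁻¹}([0,1]). Then: for every x ∈ [0,1] there are at most two sequences z with π(z) = x; if x ∈ [0,1] is irrational, or x ∈ {0,1}, there is exactly one such sequence; and if x is rational with 0 < x < 1 there are exactly two such sequences. -/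
/-- `L = [[1,0],[1,1]]`. -/
def Lmat : Matrix (Fin 2) (Fin 2) ℤ := !![1, 0; 1, 1]

/-- `N = [[1,1],[0,1]]`. -/
def Nmat : Matrix (Fin 2) (Fin 2) ℤ := !![1, 1; 0, 1]

/-- `L⁻¹ = [[1,0],[-1,1]]`. -/
def Linv : Matrix (Fin 2) (Fin 2) ℤ := !![1, 0; -1, 1]

/-- The Möbius action of an integer matrix `[[a,b],[c,d]]` on `ℝ`: `x ↦ (ax+b)/(cx+d)`. -/
noncomputable def mobius (M : Matrix (Fin 2) (Fin 2) ℤ) (x : ℝ) : ℝ :=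
  ((M 0 0 : ℝ) * x + (M 0 1 : ℝ)) / ((M 1 0 : ℝ) * x + (M 1 1 : ℝ))

/-- `M_t = L ⬝ (z 0 ⬝ z 1 ⬝ ⋯ ⬝ z (t-1)) ⬝ L⁻¹`. -/
def conjWordProd (z : ℕ → Matrix (Fin 2) (Fin 2) ℤ) (t : ℕ) : Matrix (Fin 2) (Fin 2) ℤ :=
  Lmat * ((List.range t).map z).prod * Linv

/-- The set of `{L,N}`-valued sequences `z` with `π(z) = x`, where `π(z)` is the unique
point of `⋂ t, f_{L (z 0 ⋯ z (t-1)) L⁻¹}([0,1])`; since that intersection is a singleton,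
`π(z) = x` is expressed by `x` belonging to every term of the chain. -/
def piFiber (x : ℝ) : Set (ℕ → Matrix (Fin 2) (Fin 2) ℤ) :=
  {z | (∀ t, z t = Lmat ∨ z t = Nmat) ∧
       ∀ t : ℕ, x ∈ mobius (conjWordProd z t) '' Set.Icc (0 : ℝ) 1}

/-!
Conjugating by `L` turns words in `L, N` into words in `L` and `B = L N L⁻¹`. For an integer
matrix `M = [[a,b],[c,d]]` of determinant one with `d, c + d > 0`, the interval
`f_M([0,1]) = [b/d, (a+b)/(c+d)]` is cut by its mediant `(a+2b)/(c+2d)` into `f_{ML}([0,1])` and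
`f_{MB}([0,1])`. A sequence in the fibre of `x` therefore goes left when `x` is below the current
mediant and right when it is above; at a tie it may go either way, after which `x` stays an
endpoint of every later interval and is never a mediant again. So the fibre consists of the two
greedy sequences, which differ exactly when `x` is a mediant somewhere along the way. Mediants are
rationals in `(0,1)`; conversely a fraction `p/q` strictly inside such an interval has
`q ≥ c + 2d` (Farey neighbours), and these denominators grow along the path, so every rational
in `(0,1)` is eventually a mediant.
-/

open Set

namespace PiFiber

def Bmat : Matrix (Fin 2) (Fin 2) ℤ := !![0, 1; -1, 2]

theorem Lmat_mul_Lmat_mul_Linv : Lmat * Lmat * Linv = Lmat := by decide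

theorem Lmat_mul_Nmat_mul_Linv : Lmat * Nmat * Linv = Bmat := by decide

theorem Linv_mul_Lmat : Linv * Lmat = 1 := by decide

theorem Lmat_ne_Nmat : Lmat ≠ Nmat := by decide

section Word

variable (z : ℕ → Matrix (Fin 2) (Fin 2) ℤ)

theorem conjWordProd_zero : conjWordProd z 0 = 1 := by
  simp only [conjWordProd, List.range_zero, List.map_nil, List.prod_nil, mul_one]
  decide

theorem conjWordProd_succ (t : ℕ) :
    conjWordProd z (t + 1) = conjWordProd z t * (Lmat * z t * Linv) := by
  simp only [conjWordProd, List.range_succ, List.map_append, List.prod_append, List.map_cons,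
    List.map_nil, List.prod_cons, List.prod_nil, mul_one, Matrix.mul_assoc]
  rw [← Matrix.mul_assoc Linv, Linv_mul_Lmat, Matrix.one_mul]

variable {z}

theorem conjWordProd_succ_of_eq_Lmat {t : ℕ} (h : z t = Lmat) :
    conjWordProd z (t + 1) = conjWordProd z t * Lmat := by
  rw [conjWordProd_succ, h, Lmat_mul_Lmat_mul_Linv]

theorem conjWordProd_succ_of_eq_Nmat {t : ℕ} (h : z t = Nmat) :
    conjWordProd z (t + 1) = conjWordProd z t * Bmat := by
  rw [conjWordProd_succ, h, Lmat_mul_Nmat_mul_Linv]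

theorem conjWordProd_congr {z' : ℕ → Matrix (Fin 2) (Fin 2) ℤ} {t : ℕ}
    (h : ∀ s < t, z s = z' s) : conjWordProd z t = conjWordProd z' t := by
  rw [conjWordProd, conjWordProd,
    List.map_congr_left fun s hs => h s (List.mem_range.mp hs)]

end Word

section Farey

variable {M : Matrix (Fin 2) (Fin 2) ℤ}

noncomputable def leftEnd (M : Matrix (Fin 2) (Fin 2) ℤ) : ℝ := M 0 1 / M 1 1

noncomputable def rightEnd (M : Matrix (Fin 2) (Fin 2) ℤ) : ℝ :=
  (M 0 0 + M 0 1) / (M 1 0 + M 1 1)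

noncomputable def mediant (M : Matrix (Fin 2) (Fin 2) ℤ) : ℝ :=
  (M 0 0 + 2 * M 0 1) / (M 1 0 + 2 * M 1 1)

theorem mul_Lmat_eq (M : Matrix (Fin 2) (Fin 2) ℤ) :
    M * Lmat = !![M 0 0 + M 0 1, M 0 1; M 1 0 + M 1 1, M 1 1] := by
  rw [Matrix.eta_fin_two M, Lmat, Matrix.mul_fin_two]
  simp

theorem mul_Bmat_eq (M : Matrix (Fin 2) (Fin 2) ℤ) :
    M * Bmat = !![-M 0 1, M 0 0 + 2 * M 0 1; -M 1 1, M 1 0 + 2 * M 1 1] := by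
  rw [Matrix.eta_fin_two M, Bmat, Matrix.mul_fin_two]
  simp only [Matrix.of_apply, Matrix.cons_val', Matrix.cons_val_zero, Matrix.cons_val_one,
    Matrix.empty_val', Matrix.cons_val_fin_one]
  congr 1; ring_nf

theorem leftEnd_mul_Lmat (M : Matrix (Fin 2) (Fin 2) ℤ) : leftEnd (M * Lmat) = leftEnd M := by
  simp [leftEnd, mul_Lmat_eq]

theorem rightEnd_mul_Lmat (M : Matrix (Fin 2) (Fin 2) ℤ) : rightEnd (M * Lmat) = mediant M := by
  simp [rightEnd, mediant, mul_Lmat_eq, two_mul, add_assoc]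

theorem leftEnd_mul_Bmat (M : Matrix (Fin 2) (Fin 2) ℤ) : leftEnd (M * Bmat) = mediant M := by
  simp [leftEnd, mediant, mul_Bmat_eq]

theorem rightEnd_mul_Bmat (M : Matrix (Fin 2) (Fin 2) ℤ) : rightEnd (M * Bmat) = rightEnd M := by
  have h (u v : ℝ) : -v + (u + 2 * v) = u + v := by ring
  simp [rightEnd, mul_Bmat_eq, h]

theorem leftEnd_one : leftEnd 1 = 0 := by simp [leftEnd]

theorem rightEnd_one : rightEnd 1 = 1 := by simp [rightEnd]

theorem not_irrational_mediant (M : Matrix (Fin 2) (Fin 2) ℤ) : ¬Irrational (mediant M) :=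
  fun h => h ⟨(M 0 0 + 2 * M 0 1 : ℚ) / (M 1 0 + 2 * M 1 1), by push_cast [mediant]; rfl⟩

structure IsFarey (M : Matrix (Fin 2) (Fin 2) ℤ) : Prop where
  det_eq_one : M.det = 1
  den_left_pos : 0 < M 1 1
  den_right_pos : 0 < M 1 0 + M 1 1

namespace IsFarey

theorem one : IsFarey 1 := ⟨Matrix.det_one, by simp, by simp⟩

theorem mul_Lmat (hM : IsFarey M) : IsFarey (M * Lmat) where
  det_eq_one := by rw [Matrix.det_mul, hM.det_eq_one]; decide
  den_left_pos := by simpa [mul_Lmat_eq] using hM.den_left_pos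
  den_right_pos := by simpa [mul_Lmat_eq, add_assoc] using add_pos hM.den_right_pos hM.den_left_pos

theorem mul_Bmat (hM : IsFarey M) : IsFarey (M * Bmat) where
  det_eq_one := by rw [Matrix.det_mul, hM.det_eq_one]; decide
  den_left_pos := by
    simpa [mul_Bmat_eq, two_mul, add_assoc] using add_pos hM.den_right_pos hM.den_left_pos
  den_right_pos := by
    simp only [mul_Bmat_eq, Matrix.of_apply, Matrix.cons_val', Matrix.cons_val_zero,
      Matrix.cons_val_one, Matrix.cons_val_fin_one]
    linarith [hM.den_right_pos]

theorem det_fin_two_eq_one (hM : IsFarey M) : M 0 0 * M 1 1 - M 0 1 * M 1 0 = 1 :=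
  (Matrix.det_fin_two M).symm.trans hM.det_eq_one

theorem det_eq_one_real (hM : IsFarey M) : (M 0 0 : ℝ) * M 1 1 - M 0 1 * M 1 0 = 1 := by
  exact_mod_cast hM.det_fin_two_eq_one

variable (hM : IsFarey M)
include hM

theorem den_left_pos_real : (0 : ℝ) < M 1 1 := by exact_mod_cast hM.den_left_pos

theorem den_right_pos_real : (0 : ℝ) < M 1 0 + M 1 1 := by exact_mod_cast hM.den_right_pos

theorem leftEnd_lt_mediant : leftEnd M < mediant M := by
  have hdet := hM.det_eq_one_real
  have hd := hM.den_left_pos_real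
  have hcd := hM.den_right_pos_real
  rw [leftEnd, mediant, div_lt_div_iff₀ (by linarith) (by linarith)]
  nlinarith

theorem mediant_lt_rightEnd : mediant M < rightEnd M := by
  have hdet := hM.det_eq_one_real
  have hd := hM.den_left_pos_real
  have hcd := hM.den_right_pos_real
  rw [rightEnd, mediant, div_lt_div_iff₀ (by linarith) (by linarith)]
  nlinarith

theorem mobius_image_Icc : mobius M '' Icc 0 1 = Icc (leftEnd M) (rightEnd M) := by
  have hdet := hM.det_eq_one_real
  have hd := hM.den_left_pos_real
  have hcd := hM.den_right_pos_real
  have hden : ∀ w ∈ Icc (0 : ℝ) 1, 0 < (M 1 0 : ℝ) * w + M 1 1 := fun w hw => by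
    nlinarith [mul_nonneg hw.1 hcd.le, mul_nonneg (sub_nonneg.2 hw.2) hd.le]
  apply Subset.antisymm
  · rintro _ ⟨w, hw, rfl⟩
    -- the Möbius map is increasing: `f w - f 0` and `f 1 - f w` have numerators `w` and `1 - w`
    constructor
    · rw [leftEnd, mobius, div_le_div_iff₀ hd (hden w hw)]
      nlinarith [hw.1]
    · rw [rightEnd, mobius, div_le_div_iff₀ (hden w hw) hcd]
      nlinarith [hw.2]
  · have hcont : ContinuousOn (mobius M) (Icc 0 1) :=
      ContinuousOn.div (by fun_prop) (by fun_prop) fun w hw => (hden w hw).ne'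
    simpa [mobius, leftEnd, rightEnd] using intermediate_value_Icc zero_le_one hcont

theorem den_mediant_le_of_mem_Ioo {p q : ℤ} (hq : 0 < q)
    (h : (p / q : ℝ) ∈ Ioo (leftEnd M) (rightEnd M)) : M 1 0 + 2 * M 1 1 ≤ q := by
  have hq' : (0 : ℝ) < q := by exact_mod_cast hq
  obtain ⟨h₁, h₂⟩ := h
  rw [leftEnd, div_lt_div_iff₀ hM.den_left_pos_real hq'] at h₁
  rw [rightEnd, div_lt_div_iff₀ hq' hM.den_right_pos_real] at h₂
  have hl : 1 ≤ p * M 1 1 - M 0 1 * q := by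
    have : M 0 1 * q < p * M 1 1 := by exact_mod_cast h₁
    omega
  have hr : 1 ≤ (M 0 0 + M 0 1) * q - p * (M 1 0 + M 1 1) := by
    have : p * (M 1 0 + M 1 1) < (M 0 0 + M 0 1) * q := by exact_mod_cast h₂
    omega
  -- `q = q * det M = d * ((a + b) q - p (c + d)) + (c + d) * (p d - b q)`
  have hdet := hM.det_fin_two_eq_one
  nlinarith [mul_le_mul_of_nonneg_left hr hM.den_left_pos.le,
    mul_le_mul_of_nonneg_left hl hM.den_right_pos.le]

end IsFarey

end Farey

section Path

variable {z : ℕ → Matrix (Fin 2) (Fin 2) ℤ} (hz : ∀ t, z t = Lmat ∨ z t = Nmat)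
include hz

theorem isFarey_conjWordProd (t : ℕ) : IsFarey (conjWordProd z t) := by
  induction t with
  | zero => rw [conjWordProd_zero]; exact IsFarey.one
  | succ t ih =>
    rcases hz t with h | h
    · rw [conjWordProd_succ_of_eq_Lmat h]; exact ih.mul_Lmat
    · rw [conjWordProd_succ_of_eq_Nmat h]; exact ih.mul_Bmat

theorem Icc_conjWordProd_succ_subset (t : ℕ) :
    Icc (leftEnd (conjWordProd z (t + 1))) (rightEnd (conjWordProd z (t + 1))) ⊆
      Icc (leftEnd (conjWordProd z t)) (rightEnd (conjWordProd z t)) := by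
  have hM := isFarey_conjWordProd hz t
  rcases hz t with h | h
  · rw [conjWordProd_succ_of_eq_Lmat h, leftEnd_mul_Lmat, rightEnd_mul_Lmat]
    exact Icc_subset_Icc_right hM.mediant_lt_rightEnd.le
  · rw [conjWordProd_succ_of_eq_Nmat h, leftEnd_mul_Bmat, rightEnd_mul_Bmat]
    exact Icc_subset_Icc_left hM.leftEnd_lt_mediant.le

theorem Icc_conjWordProd_subset (t : ℕ) :
    Icc (leftEnd (conjWordProd z t)) (rightEnd (conjWordProd z t)) ⊆ Icc 0 1 := by
  induction t with
  | zero => rw [conjWordProd_zero, leftEnd_one, rightEnd_one]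
  | succ t ih => exact (Icc_conjWordProd_succ_subset hz t).trans ih

theorem mediant_conjWordProd_mem_Ioo (t : ℕ) : mediant (conjWordProd z t) ∈ Ioo 0 1 := by
  have hM := isFarey_conjWordProd hz t
  have hsub := Icc_conjWordProd_subset hz t
  have hlr := (hM.leftEnd_lt_mediant.trans hM.mediant_lt_rightEnd).le
  exact ⟨(hsub (left_mem_Icc.2 hlr)).1.trans_lt hM.leftEnd_lt_mediant,
    hM.mediant_lt_rightEnd.trans_le (hsub (right_mem_Icc.2 hlr)).2⟩

theorem le_den_mediant_conjWordProd (t : ℕ) :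
    (t : ℤ) + 2 ≤ conjWordProd z t 1 0 + 2 * conjWordProd z t 1 1 := by
  induction t with
  | zero => simp [conjWordProd_zero]
  | succ t ih =>
    have hM := isFarey_conjWordProd hz t
    have := hM.den_left_pos
    have := hM.den_right_pos
    rcases hz t with h | h
    · simp only [conjWordProd_succ_of_eq_Lmat h, mul_Lmat_eq, Matrix.of_apply, Matrix.cons_val',
        Matrix.cons_val_zero, Matrix.cons_val_one, Matrix.cons_val_fin_one, Nat.cast_succ]
      linarith
    · simp only [conjWordProd_succ_of_eq_Nmat h, mul_Bmat_eq, Matrix.of_apply, Matrix.cons_val',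
        Matrix.cons_val_zero, Matrix.cons_val_one, Matrix.cons_val_fin_one, Nat.cast_succ]
      linarith

end Path

theorem mem_piFiber_iff {x : ℝ} {z : ℕ → Matrix (Fin 2) (Fin 2) ℤ} :
    z ∈ piFiber x ↔ (∀ t, z t = Lmat ∨ z t = Nmat) ∧
      ∀ t, x ∈ Icc (leftEnd (conjWordProd z t)) (rightEnd (conjWordProd z t)) := by
  refine and_congr_right fun hz => forall_congr' fun t => ?_
  rw [(isFarey_conjWordProd hz t).mobius_image_Icc]

section Fiber

variable {x : ℝ} {z : ℕ → Matrix (Fin 2) (Fin 2) ℤ} (hz : z ∈ piFiber x)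
include hz

theorem eq_Lmat_of_lt_mediant {t : ℕ} (h : x < mediant (conjWordProd z t)) : z t = Lmat := by
  refine (hz.1 t).resolve_right fun hN => h.not_ge ?_
  have := (mem_piFiber_iff.1 hz).2 (t + 1)
  rw [conjWordProd_succ_of_eq_Nmat hN, leftEnd_mul_Bmat] at this
  exact this.1

theorem eq_Nmat_of_mediant_lt {t : ℕ} (h : mediant (conjWordProd z t) < x) : z t = Nmat := by
  refine (hz.1 t).resolve_left fun hL => h.not_ge ?_
  have := (mem_piFiber_iff.1 hz).2 (t + 1)
  rw [conjWordProd_succ_of_eq_Lmat hL, rightEnd_mul_Lmat] at this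
  exact this.2

theorem eq_rightEnd_of_le {t s : ℕ} (h : x = rightEnd (conjWordProd z t)) (hts : t ≤ s) :
    x = rightEnd (conjWordProd z s) := by
  induction s, hts using Nat.le_induction with
  | base => exact h
  | succ s _ ih =>
    have hlt : mediant (conjWordProd z s) < x :=
      ih ▸ (isFarey_conjWordProd hz.1 s).mediant_lt_rightEnd
    rwa [conjWordProd_succ_of_eq_Nmat (eq_Nmat_of_mediant_lt hz hlt), rightEnd_mul_Bmat]

theorem eq_leftEnd_of_le {t s : ℕ} (h : x = leftEnd (conjWordProd z t)) (hts : t ≤ s) :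
    x = leftEnd (conjWordProd z s) := by
  induction s, hts using Nat.le_induction with
  | base => exact h
  | succ s _ ih =>
    have hlt : x < mediant (conjWordProd z s) :=
      ih ▸ (isFarey_conjWordProd hz.1 s).leftEnd_lt_mediant
    rwa [conjWordProd_succ_of_eq_Lmat (eq_Lmat_of_lt_mediant hz hlt), leftEnd_mul_Lmat]

theorem ne_mediant_of_lt {t s : ℕ} (h : x = mediant (conjWordProd z t)) (hts : t < s) :
    x ≠ mediant (conjWordProd z s) := by
  have hM := isFarey_conjWordProd hz.1 s
  rcases hz.1 t with hL | hN
  · have hr : x = rightEnd (conjWordProd z (t + 1)) := by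
      rwa [conjWordProd_succ_of_eq_Lmat hL, rightEnd_mul_Lmat]
    exact (eq_rightEnd_of_le hz hr hts ▸ hM.mediant_lt_rightEnd).ne'
  · have hl : x = leftEnd (conjWordProd z (t + 1)) := by
      rwa [conjWordProd_succ_of_eq_Nmat hN, leftEnd_mul_Bmat]
    exact (eq_leftEnd_of_le hz hl hts ▸ hM.leftEnd_lt_mediant).ne

theorem eq_of_eq_mediant {t s : ℕ} (ht : x = mediant (conjWordProd z t))
    (hs : x = mediant (conjWordProd z s)) : t = s := by
  by_contra hne
  rcases Nat.lt_or_gt_of_ne hne with hts | hst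
  · exact ne_mediant_of_lt hz ht hts hs
  · exact ne_mediant_of_lt hz hs hst ht

theorem exists_conjWordProd_eq_of_ne {z' : ℕ → Matrix (Fin 2) (Fin 2) ℤ}
    (hz' : z' ∈ piFiber x) (hne : z ≠ z') : ∃ t, conjWordProd z t = conjWordProd z' t ∧
      x = mediant (conjWordProd z t) ∧ z t ≠ z' t := by
  have hex : ∃ t, z t ≠ z' t := Function.ne_iff.1 hne
  let t := Nat.find hex
  have hM : conjWordProd z t = conjWordProd z' t :=
    conjWordProd_congr fun s hs => not_not.1 (Nat.find_min hex hs)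
  refine ⟨t, hM, ?_, Nat.find_spec hex⟩
  by_contra hx
  apply Nat.find_spec hex
  rcases lt_or_gt_of_ne hx with hlt | hgt
  · rw [eq_Lmat_of_lt_mediant hz hlt, eq_Lmat_of_lt_mediant hz' (hM ▸ hlt)]
  · rw [eq_Nmat_of_mediant_lt hz hgt, eq_Nmat_of_mediant_lt hz' (hM ▸ hgt)]

theorem exists_eq_mediant (h₀ : 0 < x) (h₁ : x < 1) (hx : ¬Irrational x) :
    ∃ t, x = mediant (conjWordProd z t) := by
  by_contra! hne
  have hIoo : ∀ t, x ∈ Ioo (leftEnd (conjWordProd z t)) (rightEnd (conjWordProd z t)) := by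
    intro t
    induction t with
    | zero => simpa [conjWordProd_zero, leftEnd_one, rightEnd_one] using ⟨h₀, h₁⟩
    | succ t ih =>
      have hmem := (mem_piFiber_iff.1 hz).2 (t + 1)
      rcases hz.1 t with h | h
      · rw [conjWordProd_succ_of_eq_Lmat h, leftEnd_mul_Lmat, rightEnd_mul_Lmat] at hmem ⊢
        exact ⟨ih.1, hmem.2.lt_of_ne (hne t)⟩
      · rw [conjWordProd_succ_of_eq_Nmat h, leftEnd_mul_Bmat, rightEnd_mul_Bmat] at hmem ⊢
        exact ⟨hmem.1.lt_of_ne (hne t).symm, ih.2⟩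
  obtain ⟨r, rfl⟩ := not_not.1 hx
  have hden := (isFarey_conjWordProd hz.1 r.den).den_mediant_le_of_mem_Ioo (p := r.num)
    (q := r.den) (by exact_mod_cast r.pos) (by simpa [Rat.cast_def] using hIoo r.den)
  linarith [le_den_mediant_conjWordProd hz.1 r.den]

end Fiber

theorem piFiber_subsingleton {x : ℝ} (hx : Irrational x ∨ x = 0 ∨ x = 1) :
    (piFiber x).Subsingleton := by
  intro z hz z' hz'
  by_contra hne
  obtain ⟨t, -, ht, -⟩ := exists_conjWordProd_eq_of_ne hz hz' hne
  have hmem := mediant_conjWordProd_mem_Ioo hz.1 t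
  rcases hx with hirr | rfl | rfl
  · exact not_irrational_mediant _ (ht ▸ hirr)
  · exact hmem.1.ne ht
  · exact hmem.2.ne' ht

section Greedy

noncomputable def digit (x : ℝ) (tieLeft : Bool) (M : Matrix (Fin 2) (Fin 2) ℤ) :
    Matrix (Fin 2) (Fin 2) ℤ :=
  if x < mediant M ∨ (tieLeft ∧ x = mediant M) then Lmat else Nmat

noncomputable def greedyMat (x : ℝ) (tieLeft : Bool) : ℕ → Matrix (Fin 2) (Fin 2) ℤ
  | 0 => 1
  | t + 1 => greedyMat x tieLeft t * (Lmat * digit x tieLeft (greedyMat x tieLeft t) * Linv)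

noncomputable def greedy (x : ℝ) (tieLeft : Bool) (t : ℕ) : Matrix (Fin 2) (Fin 2) ℤ :=
  digit x tieLeft (greedyMat x tieLeft t)

variable {x : ℝ} {M : Matrix (Fin 2) (Fin 2) ℤ}

theorem digit_eq_Lmat_or_eq_Nmat (tieLeft : Bool) :
    digit x tieLeft M = Lmat ∨ digit x tieLeft M = Nmat := by
  unfold digit; split_ifs <;> simp

theorem digit_true_of_eq_mediant (h : x = mediant M) : digit x true M = Lmat := by
  simp [digit, h]

theorem digit_false_of_eq_mediant (h : x = mediant M) : digit x false M = Nmat := by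
  simp [digit, h]

theorem conjWordProd_greedy (x : ℝ) (tieLeft : Bool) (t : ℕ) :
    conjWordProd (greedy x tieLeft) t = greedyMat x tieLeft t := by
  induction t with
  | zero => exact conjWordProd_zero _
  | succ t ih => rw [conjWordProd_succ, ih, greedyMat, greedy]

theorem greedy_apply (x : ℝ) (tieLeft : Bool) (t : ℕ) :
    greedy x tieLeft t = digit x tieLeft (conjWordProd (greedy x tieLeft) t) := by
  rw [conjWordProd_greedy, greedy]

theorem greedy_mem_piFiber (hx : x ∈ Icc 0 1) (tieLeft : Bool) :
    greedy x tieLeft ∈ piFiber x := by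
  refine mem_piFiber_iff.2 ⟨fun t => digit_eq_Lmat_or_eq_Nmat tieLeft, fun t => ?_⟩
  induction t with
  | zero => rwa [conjWordProd_zero, leftEnd_one, rightEnd_one]
  | succ t ih =>
    set M := conjWordProd (greedy x tieLeft) t
    by_cases hc : x < mediant M ∨ (tieLeft ∧ x = mediant M)
    · have hL : greedy x tieLeft t = Lmat := by rw [greedy_apply, digit, if_pos hc]
      rw [conjWordProd_succ_of_eq_Lmat hL, leftEnd_mul_Lmat, rightEnd_mul_Lmat]
      exact ⟨ih.1, hc.elim le_of_lt fun h => h.2.le⟩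
    · have hN : greedy x tieLeft t = Nmat := by rw [greedy_apply, digit, if_neg hc]
      rw [conjWordProd_succ_of_eq_Nmat hN, leftEnd_mul_Bmat, rightEnd_mul_Bmat]
      exact ⟨not_lt.1 (not_or.1 hc).1, ih.2⟩

theorem eq_greedy_or_eq_greedy {z : ℕ → Matrix (Fin 2) (Fin 2) ℤ} (hz : z ∈ piFiber x) :
    z = greedy x true ∨ z = greedy x false := by
  have hx : x ∈ Icc 0 1 := Icc_conjWordProd_subset hz.1 0 ((mem_piFiber_iff.1 hz).2 0)
  by_contra! h
  -- `z` can leave the `true`-greedy sequence only by going right at a tie, and the `false`-greedy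
  -- one only by going left at a tie; but there is only one tie
  obtain ⟨t, hM, ht, hne⟩ := exists_conjWordProd_eq_of_ne hz (greedy_mem_piFiber hx true) h.1
  obtain ⟨s, hM', hs, hne'⟩ := exists_conjWordProd_eq_of_ne hz (greedy_mem_piFiber hx false) h.2
  have hzt : z t = Nmat := (hz.1 t).resolve_left fun hL =>
    hne (by rw [hL, greedy_apply, ← hM, digit_true_of_eq_mediant ht])
  have hzs : z s = Lmat := (hz.1 s).resolve_right fun hN =>
    hne' (by rw [hN, greedy_apply, ← hM', digit_false_of_eq_mediant hs])
  rw [eq_of_eq_mediant hz ht hs] at hzt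
  exact Lmat_ne_Nmat (hzs.symm.trans hzt)

theorem piFiber_eq_pair (hx : x ∈ Icc 0 1) :
    piFiber x = {greedy x true, greedy x false} :=
  Subset.antisymm (fun _ hz => eq_greedy_or_eq_greedy hz)
    (insert_subset_iff.2 ⟨greedy_mem_piFiber hx true,
      singleton_subset_iff.2 (greedy_mem_piFiber hx false)⟩)

theorem greedy_true_ne_greedy_false (h₀ : 0 < x) (h₁ : x < 1) (hx : ¬Irrational x) :
    greedy x true ≠ greedy x false := by
  intro h
  obtain ⟨t, ht⟩ := exists_eq_mediant (greedy_mem_piFiber ⟨h₀.le, h₁.le⟩ true) h₀ h₁ hx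
  apply Lmat_ne_Nmat
  calc Lmat = greedy x true t := by rw [greedy_apply, digit_true_of_eq_mediant ht]
    _ = greedy x false t := by rw [h]
    _ = Nmat := by rw [greedy_apply, ← h, digit_false_of_eq_mediant ht]

end Greedy

end PiFiber

open PiFiber

/-- Every `x ∈ [0,1]` has at most two `π`-preimages; irrational points and the endpoints
`0, 1` have exactly one; rational points strictly between `0` and `1` have exactly two. -/
theorem piFiber_card :
    (∀ x ∈ Set.Icc (0 : ℝ) 1, ∃ z₁ z₂, ∀ z ∈ piFiber x, z = z₁ ∨ z = z₂) ∧
    (∀ x ∈ Set.Icc (0 : ℝ) 1, (Irrational x ∨ x = 0 ∨ x = 1) → ∃! z, z ∈ piFiber x) ∧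
    (∀ x : ℝ, 0 < x → x < 1 → ¬Irrational x →
      ∃ z₁ z₂, z₁ ≠ z₂ ∧ piFiber x = {z₁, z₂}) := by
  refine ⟨fun x _ => ?_, fun x hx hx' => ?_, fun x h₀ h₁ hx => ?_⟩
  · exact ⟨greedy x true, greedy x false, fun _ hz => eq_greedy_or_eq_greedy hz⟩
  · exact ⟨greedy x true, greedy_mem_piFiber hx true,
      fun _ hz => piFiber_subsingleton hx' hz (greedy_mem_piFiber hx true)⟩
  · exact ⟨greedy x true, greedy x false, greedy_true_ne_greedy_false h₀ h₁ hx,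
      piFiber_eq_pair ⟨h₀.le, h₁.le⟩⟩
end
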